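/- Let n ≥ 2, let S : ℝⁿ → 𝒮ⁿ be a smooth symmetric-matrix-valued map, and let A : ℝⁿ → ℝ^{n×n×n×n} be a smooth map with components A^{ik}_{jl} such that: (i) A^{ik}_{jl} = −A^{ij}_{kl} (skew-symmetry under exchange of the indices k and j); (ii) Σ_k ∂_k A^{ik}_{jl} = −Σ_k ∂_k A^{lk}_{ji} for all i, j, l; and (iii) ½ Σ_{k,l} ∂_k ∂_l (A^{ik}_{jl} + A^{jk}_{il}) = S_{ij} for all i, j. Define Ã^{ik}_{jl} := ½ (A^{il}_{jk} − A^{kl}_{ji}). Then Ã is skew-symmetric in the pair (i,k) and in the pair (j,l), and ½ Σ_{k,l} ∂_k ∂_l (Ã^{ik}_{jl} + Ã^{jk}_{il}) = S_{ij} for all i, j; that is, 𝓛(Ã) = S. -/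

import Mathlib

noncomputable section
open MeasureTheory

/-- `Euc n` is Euclidean space `ℝⁿ`. -/
abbrev Euc (n : ℕ) := EuclideanSpace ℝ (Fin n)

/-- Partial derivative `∂ⱼ` of a scalar function on `ℝⁿ`. -/
def pd {n : ℕ} (j : Fin n) (f : Euc n → ℝ) (x : Euc n) : ℝ :=
  fderiv ℝ f x (EuclideanSpace.single j 1)

lemma pd_smooth {n : ℕ} (l : Fin n) {f : Euc n → ℝ} (hf : ContDiff ℝ (⊤ : ℕ∞) f) :
    ContDiff ℝ (⊤ : ℕ∞) (pd l f) := by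
  have : pd l f = (ContinuousLinearMap.apply ℝ ℝ (EuclideanSpace.single l 1)) ∘ fderiv ℝ f := rfl
  rw [this]
  exact (ContinuousLinearMap.apply ℝ ℝ (EuclideanSpace.single l 1)).contDiff.comp
    (hf.fderiv_right (m := (⊤ : ℕ∞)) (by simp))

lemma pd_add {n : ℕ} (k : Fin n) {f g : Euc n → ℝ} {x : Euc n}
    (hf : DifferentiableAt ℝ f x) (hg : DifferentiableAt ℝ g x) :
    pd k (fun y => f y + g y) x = pd k f x + pd k g x := by
  unfold pd; rw [fderiv_fun_add hf hg]; rfl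

lemma pd_neg {n : ℕ} (k : Fin n) (f : Euc n → ℝ) (x : Euc n) :
    pd k (fun y => -f y) x = - pd k f x := by
  unfold pd; rw [fderiv_fun_neg]; rfl

lemma pd_sum {n : ℕ} {ι : Type*} (k : Fin n) (s : Finset ι) (f : ι → Euc n → ℝ) (x : Euc n)
    (h : ∀ i ∈ s, DifferentiableAt ℝ (f i) x) :
    pd k (fun y => ∑ i ∈ s, f i y) x = ∑ i ∈ s, pd k (f i) x := by
  unfold pd; rw [fderiv_fun_sum h]; simp

lemma pd_lin {n : ℕ} (k : Fin n) (f g h p : Euc n → ℝ) (x : Euc n)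
    (hf : DifferentiableAt ℝ f x) (hg : DifferentiableAt ℝ g x)
    (hh : DifferentiableAt ℝ h x) (hp : DifferentiableAt ℝ p x) :
    pd k (fun y => (1/2 : ℝ) * (f y - g y) + (1/2 : ℝ) * (h y - p y)) x
      = (1/2) * (pd k f x - pd k g x) + (1/2) * (pd k h x - pd k p x) := by
  unfold pd
  rw [fderiv_fun_add ((hf.fun_sub hg).const_mul _) ((hh.fun_sub hp).const_mul _),
    fderiv_const_mul (hf.fun_sub hg), fderiv_const_mul (hh.fun_sub hp),
    fderiv_fun_sub hf hg, fderiv_fun_sub hh hp]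
  simp

lemma pd_comm {n : ℕ} (f : Euc n → ℝ) (hf : ContDiff ℝ (⊤ : ℕ∞) f) (k l : Fin n) (x : Euc n) :
    pd k (pd l f) x = pd l (pd k f) x := by
  have hd : Differentiable ℝ f := hf.differentiable (by simp)
  have hf2 : Differentiable ℝ (fderiv ℝ f) := (hf.fderiv_right (m := (⊤ : ℕ∞)) (by simp)).differentiable (by simp)
  have key : ∀ v w : Euc n, fderiv ℝ (fun y => fderiv ℝ f y v) x w
      = fderiv ℝ (fderiv ℝ f) x w v := by
    intro v w
    rw [show (fun y => fderiv ℝ f y v) = fun y => (fderiv ℝ f y) ((fun _ => v) y) from rfl,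
      fderiv_clm_apply (hf2 x) (differentiableAt_const v)]
    simp
  have symm := second_derivative_symmetric (f' := fderiv ℝ f)
    (fun y => (hd y).hasFDerivAt) (hf2 x).hasFDerivAt
    (EuclideanSpace.single k 1) (EuclideanSpace.single l 1)
  show fderiv ℝ (pd l f) x (EuclideanSpace.single k 1)
      = fderiv ℝ (pd k f) x (EuclideanSpace.single l 1)
  rw [show pd l f = fun y => fderiv ℝ f y (EuclideanSpace.single l 1) from rfl,
    show pd k f = fun y => fderiv ℝ f y (EuclideanSpace.single k 1) from rfl,
    key, key]
  exact symm

lemma pd_pd_add {n : ℕ} (k l : Fin n) (f g : Euc n → ℝ)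
    (hf : ContDiff ℝ (⊤ : ℕ∞) f) (hg : ContDiff ℝ (⊤ : ℕ∞) g) (x : Euc n) :
    pd k (pd l (fun y => f y + g y)) x = pd k (pd l f) x + pd k (pd l g) x := by
  have e : pd l (fun y => f y + g y) = fun z => pd l f z + pd l g z :=
    funext fun z => pd_add l (hf.differentiable (by simp) z) (hg.differentiable (by simp) z)
  rw [e]
  exact pd_add k ((pd_smooth l hf).differentiable (by simp) x)
    ((pd_smooth l hg).differentiable (by simp) x)

lemma pd_pd_lin {n : ℕ} (k l : Fin n) (f g h p : Euc n → ℝ)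
    (hf : ContDiff ℝ (⊤ : ℕ∞) f) (hg : ContDiff ℝ (⊤ : ℕ∞) g)
    (hh : ContDiff ℝ (⊤ : ℕ∞) h) (hp : ContDiff ℝ (⊤ : ℕ∞) p) (x : Euc n) :
    pd k (pd l (fun y => (1/2 : ℝ) * (f y - g y) + (1/2 : ℝ) * (h y - p y))) x
      = (1/2) * (pd k (pd l f) x - pd k (pd l g) x)
      + (1/2) * (pd k (pd l h) x - pd k (pd l p) x) := by
  have e : pd l (fun y => (1/2 : ℝ) * (f y - g y) + (1/2 : ℝ) * (h y - p y))
      = fun z => (1/2 : ℝ) * (pd l f z - pd l g z) + (1/2 : ℝ) * (pd l h z - pd l p z) :=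
    funext fun z => pd_lin l f g h p z (hf.differentiable (by simp) z)
      (hg.differentiable (by simp) z) (hh.differentiable (by simp) z) (hp.differentiable (by simp) z)
  rw [e]
  exact pd_lin k (pd l f) (pd l g) (pd l h) (pd l p) x
    ((pd_smooth l hf).differentiable (by simp) x) ((pd_smooth l hg).differentiable (by simp) x)
    ((pd_smooth l hh).differentiable (by simp) x) ((pd_smooth l hp).differentiable (by simp) x)

/-- Antisymmetrization step: if `A` satisfies
(i) `A^{ik}_{jl} = -A^{ij}_{kl}`, (ii) `Σₖ ∂ₖ A^{ik}_{jl} = -Σₖ ∂ₖ A^{lk}_{ji}`,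
and (iii) `½ Σ_{k,l} ∂ₖ∂ₗ (A^{ik}_{jl} + A^{jk}_{il}) = S_{ij}`, then
`Ã^{ik}_{jl} := ½ (A^{il}_{jk} - A^{kl}_{ji})` is skew-symmetric in `(i,k)` and
in `(j,l)` and satisfies `𝓛(Ã) = S`. (Components: `A x i k j l = A^{ik}_{jl}(x)`.) -/
theorem antisymmetrized_potential
    (n : ℕ) (hn : 2 ≤ n)
    (S : Euc n → Fin n → Fin n → ℝ) (hS : ContDiff ℝ (⊤ : ℕ∞) S)
    (hsymS : ∀ x i j, S x i j = S x j i)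
    (A : Euc n → Fin n → Fin n → Fin n → Fin n → ℝ) (hA : ContDiff ℝ (⊤ : ℕ∞) A)
    (h₁ : ∀ x i k j l, A x i k j l = - A x i j k l)
    (h₂ : ∀ x i j l, ∑ k, pd k (fun y => A y i k j l) x
      = - ∑ k, pd k (fun y => A y l k j i) x)
    (h₃ : ∀ x i j, (1 / 2) * ∑ k, ∑ l,
      pd k (pd l (fun y => A y i k j l + A y j k i l)) x = S x i j)
    (tA : Euc n → Fin n → Fin n → Fin n → Fin n → ℝ)
    (htA : ∀ x i k j l, tA x i k j l = (1 / 2) * (A x i l j k - A x k l j i)) :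
    (∀ x i k j l, tA x i k j l = - tA x k i j l) ∧
    (∀ x i k j l, tA x i k j l = - tA x i k l j) ∧
    (∀ x i j, (1 / 2) * ∑ k, ∑ l,
      pd k (pd l (fun y => tA y i k j l + tA y j k i l)) x = S x i j) := by
  refine ⟨?_, ?_, ?_⟩
  · intro x i k j l; rw [htA, htA]; ring
  · intro x i k j l; rw [htA, htA, h₁ x i j l k, h₁ x k j l i]; ring
  · intro x i j
    have hcomp : ∀ a b c d : Fin n, ContDiff ℝ (⊤ : ℕ∞) (fun y => A y a b c d) := fun a b c d =>
      contDiff_pi.mp (contDiff_pi.mp (contDiff_pi.mp (contDiff_pi.mp hA a) b) c) d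
    have hpdiff : ∀ (m a b c d : Fin n) (z : Euc n),
        DifferentiableAt ℝ (pd m (fun y => A y a b c d)) z :=
      fun m a b c d z => ((pd_smooth m (hcomp a b c d)).differentiable (by simp)) z
    have step1 : ∀ k l : Fin n, pd k (pd l (fun y => tA y i k j l + tA y j k i l)) x
        = (1/2) * (pd k (pd l (fun y => A y i l j k)) x - pd k (pd l (fun y => A y k l j i)) x)
        + (1/2) * (pd k (pd l (fun y => A y j l i k)) x - pd k (pd l (fun y => A y k l i j)) x) := by
      intro k l
      have e : (fun y => tA y i k j l + tA y j k i l)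
          = fun y => (1/2 : ℝ) * (A y i l j k - A y k l j i)
            + (1/2 : ℝ) * (A y j l i k - A y k l i j) := by
        funext y; rw [htA, htA]
      rw [e]
      exact pd_pd_lin k l (fun y => A y i l j k) (fun y => A y k l j i)
        (fun y => A y j l i k) (fun y => A y k l i j)
        (hcomp i l j k) (hcomp k l j i) (hcomp j l i k) (hcomp k l i j) x
    have C1 : ∑ k, ∑ l, pd k (pd l (fun y => A y i l j k)) x
        = ∑ k, ∑ l, pd k (pd l (fun y => A y i k j l)) x := by
      rw [Finset.sum_comm]
      exact Finset.sum_congr rfl fun k _ => Finset.sum_congr rfl fun l _ =>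
        pd_comm _ (hcomp i k j l) l k x
    have C3 : ∑ k, ∑ l, pd k (pd l (fun y => A y j l i k)) x
        = ∑ k, ∑ l, pd k (pd l (fun y => A y j k i l)) x := by
      rw [Finset.sum_comm]
      exact Finset.sum_congr rfl fun k _ => Finset.sum_congr rfl fun l _ =>
        pd_comm _ (hcomp j k i l) l k x
    have C2 : ∑ k, ∑ l, pd k (pd l (fun y => A y k l j i)) x
        = - ∑ k, ∑ l, pd k (pd l (fun y => A y i l j k)) x := by
      rw [← Finset.sum_neg_distrib]
      refine Finset.sum_congr rfl fun k _ => ?_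
      have hL : ∑ l, pd k (pd l (fun y => A y k l j i)) x
          = pd k (fun z => ∑ l, pd l (fun y => A y k l j i) z) x :=
        (pd_sum k Finset.univ (fun l => pd l (fun y => A y k l j i)) x
          (fun l _ => hpdiff l k l j i x)).symm
      have hfun : (fun z => ∑ l, pd l (fun y => A y k l j i) z)
          = fun z => - ∑ l, pd l (fun y => A y i l j k) z := funext fun z => (h₂ z k j i)
      rw [hL, hfun, pd_neg k (fun z => ∑ l, pd l (fun y => A y i l j k) z) x,
        pd_sum k Finset.univ (fun l => pd l (fun y => A y i l j k)) x
          (fun l _ => hpdiff l i l j k x)]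
    have C4 : ∑ k, ∑ l, pd k (pd l (fun y => A y k l i j)) x
        = - ∑ k, ∑ l, pd k (pd l (fun y => A y j l i k)) x := by
      rw [← Finset.sum_neg_distrib]
      refine Finset.sum_congr rfl fun k _ => ?_
      have hL : ∑ l, pd k (pd l (fun y => A y k l i j)) x
          = pd k (fun z => ∑ l, pd l (fun y => A y k l i j) z) x :=
        (pd_sum k Finset.univ (fun l => pd l (fun y => A y k l i j)) x
          (fun l _ => hpdiff l k l i j x)).symm
      have hfun : (fun z => ∑ l, pd l (fun y => A y k l i j) z)
          = fun z => - ∑ l, pd l (fun y => A y j l i k) z := funext fun z => (h₂ z k i j)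
      rw [hL, hfun, pd_neg k (fun z => ∑ l, pd l (fun y => A y j l i k) z) x,
        pd_sum k Finset.univ (fun l => pd l (fun y => A y j l i k)) x
          (fun l _ => hpdiff l j l i k x)]
    have expand : ∑ k, ∑ l, pd k (pd l (fun y => tA y i k j l + tA y j k i l)) x
        = (1/2) * ((∑ k, ∑ l, pd k (pd l (fun y => A y i l j k)) x)
            - ∑ k, ∑ l, pd k (pd l (fun y => A y k l j i)) x)
        + (1/2) * ((∑ k, ∑ l, pd k (pd l (fun y => A y j l i k)) x)
            - ∑ k, ∑ l, pd k (pd l (fun y => A y k l i j)) x) := by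
      simp only [step1, Finset.sum_add_distrib, ← Finset.mul_sum, Finset.sum_sub_distrib]
    have hsplit : ∑ k, ∑ l, pd k (pd l (fun y => A y i k j l + A y j k i l)) x
        = (∑ k, ∑ l, pd k (pd l (fun y => A y i k j l)) x)
          + ∑ k, ∑ l, pd k (pd l (fun y => A y j k i l)) x := by
      have e : ∀ k l : Fin n, pd k (pd l (fun y => A y i k j l + A y j k i l)) x
          = pd k (pd l (fun y => A y i k j l)) x + pd k (pd l (fun y => A y j k i l)) x :=
        fun k l => pd_pd_add k l (fun y => A y i k j l) (fun y => A y j k i l)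
          (hcomp i k j l) (hcomp j k i l) x
      simp only [e]
      rw [← Finset.sum_add_distrib]
      exact Finset.sum_congr rfl fun k _ => Finset.sum_add_distrib
    have h3 := h₃ x i j
    rw [hsplit] at h3
    rw [expand, C2, C4, C1, C3]
    linarith [h3]
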